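/- arXiv:2604.19950 — 2 statements merged into one kernel-verified Lean document; each statement's English description precedes it below -/
import Mathlib

section
/- Let a, b be real numbers with 0 < a, 0 < b < 1, and a² ≤ 4b (so 1 + az + bz² has a conjugate pair of roots). If a(b+1)/(4b) < 1, then min_{|z| ≤ 1} |1 + a z + b z²| = (1 - b)·√(1 - a²/(4b)). -/
/-!
Write `p z = 1 + a z + b z²`, `t = 1 - |z|²` and `x = Re z`. A polynomial identity gives
`4b|p z|² - (1-b)²(4b-a²) = P² - 4bM t + 4b³t²` with `P = 4bx + a(b+1)`,
`M = a² + 2abx - 2b(1-b)`. On the unit circle (`t = 0`) the right side is the square `P²`,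
which vanishes at `x = -a(b+1)/(4b)`, a point of `[-1, 1]` exactly when `a(b+1)/(4b) ≤ 1`.
Inside the disc the right side is a quadratic in `t ≥ 0`, nonnegative because either `M ≤ 0`
or its discriminant `16b²(M² - bP²)` is `≤ 0`.
-/

open Complex

lemma quadratic_nonneg_of_nonneg_or_discrim_nonpos {K : Type*} [Field K] [LinearOrder K]
    [IsStrictOrderedRing K] {a b c t : K} (ha : 0 < a) (hc : 0 ≤ c) (ht : 0 ≤ t)
    (h : 0 ≤ b ∨ discrim a b c ≤ 0) :
    0 ≤ a * (t * t) + b * t + c := by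
  rcases h with hb | hd
  · positivity
  · have key : 4 * a * (a * (t * t) + b * t + c) = (2 * a * t + b) ^ 2 - discrim a b c := by
      rw [discrim]; ring
    refine (mul_nonneg_iff_of_pos_left (by positivity : (0 : K) < 4 * a)).1 ?_
    rw [key]
    nlinarith [sq_nonneg (2 * a * t + b)]

lemma four_mul_normSq_quadratic (a b : ℝ) (z : ℂ) :
    4 * b * normSq (1 + (a : ℂ) * z + (b : ℂ) * z ^ 2) =
      (1 - b) ^ 2 * (4 * b - a ^ 2) + (4 * b * z.re + a * (b + 1)) ^ 2
        - 4 * b * (a ^ 2 + 2 * a * b * z.re - 2 * b * (1 - b)) * (1 - normSq z)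
        + 4 * b ^ 3 * ((1 - normSq z) * (1 - normSq z)) := by
  simp only [normSq_apply, add_re, add_im, mul_re, mul_im, one_re, one_im, ofReal_re, ofReal_im,
    pow_two]
  ring

lemma sq_le_mul_sq_of_pos {a b x : ℝ} (ha : 0 < a) (hb0 : 0 < b) (hb1 : b < 1)
    (hab : a ^ 2 ≤ 4 * b) (hM : 0 < a ^ 2 + 2 * a * b * x - 2 * b * (1 - b)) :
    (a ^ 2 + 2 * a * b * x - 2 * b * (1 - b)) ^ 2 ≤ b * (4 * b * x + a * (b + 1)) ^ 2 := by
  have hpos : 0 < a + 2 * b * x := by nlinarith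
  have hsq : b * (1 - b) ^ 2 ≤ (a + 2 * b * x) ^ 2 := by
    have h : (2 * b * (1 - b)) ^ 2 ≤ (a * (a + 2 * b * x)) ^ 2 :=
      pow_le_pow_left₀ (by nlinarith) (by nlinarith) 2
    nlinarith [mul_le_mul_of_nonneg_right hab (sq_nonneg (a + 2 * b * x))]
  have hfac : b * (4 * b * x + a * (b + 1)) ^ 2 - (a ^ 2 + 2 * a * b * x - 2 * b * (1 - b)) ^ 2
      = (4 * b - a ^ 2) * ((a + 2 * b * x) ^ 2 - b * (1 - b) ^ 2) := by ring
  nlinarith [mul_nonneg (sub_nonneg.2 hab) (sub_nonneg.2 hsq)]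

lemma le_four_mul_normSq_quadratic {a b : ℝ} {z : ℂ} (ha : 0 < a) (hb0 : 0 < b) (hb1 : b < 1)
    (hab : a ^ 2 ≤ 4 * b) (hz : ‖z‖ ≤ 1) :
    (1 - b) ^ 2 * (4 * b - a ^ 2) ≤ 4 * b * normSq (1 + (a : ℂ) * z + (b : ℂ) * z ^ 2) := by
  set M := a ^ 2 + 2 * a * b * z.re - 2 * b * (1 - b)
  set P := 4 * b * z.re + a * (b + 1)
  have ht : 0 ≤ 1 - normSq z := by
    rw [← Complex.sq_norm]; nlinarith [norm_nonneg z]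
  have hdisc : 0 ≤ -(4 * b * M) ∨ discrim (4 * b ^ 3) (-(4 * b * M)) (P ^ 2) ≤ 0 := by
    rcases le_or_gt M 0 with hM | hM
    · left; nlinarith
    · right
      have hd : discrim (4 * b ^ 3) (-(4 * b * M)) (P ^ 2)
          = 16 * b ^ 2 * (M ^ 2 - b * P ^ 2) := by
        rw [discrim]; ring
      rw [hd]
      nlinarith [sq_le_mul_sq_of_pos ha hb0 hb1 hab hM, sq_nonneg b]
  have hq := quadratic_nonneg_of_nonneg_or_discrim_nonpos (by positivity) (sq_nonneg P) ht hdisc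
  rw [four_mul_normSq_quadratic]
  linarith

lemma four_mul_normSq_quadratic_of_re_eq {a b : ℝ} {z : ℂ} (hb0 : b ≠ 0) (hz : normSq z = 1)
    (hre : z.re = -(a * (b + 1) / (4 * b))) :
    4 * b * normSq (1 + (a : ℂ) * z + (b : ℂ) * z ^ 2) = (1 - b) ^ 2 * (4 * b - a ^ 2) := by
  rw [four_mul_normSq_quadratic, hz, hre]
  field_simp
  ring

lemma exists_normSq_eq_one_re_eq {c : ℝ} (hc : c ^ 2 ≤ 1) : ∃ z : ℂ, normSq z = 1 ∧ z.re = c :=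
  ⟨⟨c, √(1 - c ^ 2)⟩, by rw [normSq_mk, ← sq, ← sq, Real.sq_sqrt (by linarith)]; ring, rfl⟩

theorem stmt_9 (a b : ℝ) (ha : 0 < a) (hb0 : 0 < b) (hb1 : b < 1)
    (hab : a ^ 2 ≤ 4 * b) (hcrit : a * (b + 1) / (4 * b) < 1) :
    IsLeast ((fun z : ℂ => ‖1 + (a : ℂ) * z + (b : ℂ) * z ^ 2‖) '' {z : ℂ | ‖z‖ ≤ 1})
      ((1 - b) * Real.sqrt (1 - a ^ 2 / (4 * b))) := by
  set m := (1 - b) * Real.sqrt (1 - a ^ 2 / (4 * b))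
  have hb4 : 0 < 4 * b := by positivity
  have hm0 : 0 ≤ m := mul_nonneg (by linarith) (Real.sqrt_nonneg _)
  have hm : 4 * b * m ^ 2 = (1 - b) ^ 2 * (4 * b - a ^ 2) := by
    have : 0 ≤ 1 - a ^ 2 / (4 * b) := by rw [sub_nonneg, div_le_one hb4]; exact hab
    rw [mul_pow, Real.sq_sqrt this]
    field_simp
  obtain ⟨z₀, hz₀, hre⟩ := exists_normSq_eq_one_re_eq (c := -(a * (b + 1) / (4 * b))) (by
    have : 0 < a * (b + 1) / (4 * b) := by positivity
    nlinarith [hcrit])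
  refine ⟨⟨z₀, ?_, ?_⟩, ?_⟩
  · rw [Set.mem_ofPred_eq, ← sq_le_one_iff₀ (norm_nonneg _), Complex.sq_norm, hz₀]
  · rw [← sq_eq_sq₀ (norm_nonneg _) hm0, Complex.sq_norm]
    refine mul_left_cancel₀ hb4.ne' ?_
    rw [hm, four_mul_normSq_quadratic_of_re_eq hb0.ne' hz₀ hre]
  · rintro _ ⟨z, hz, rfl⟩
    rw [← pow_le_pow_iff_left₀ hm0 (norm_nonneg _) two_ne_zero, Complex.sq_norm]
    refine le_of_mul_le_mul_left ?_ hb4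
    rw [hm]
    exact le_four_mul_normSq_quadratic ha hb0 hb1 hab hz
end

section
/- Let a, b be nonnegative real numbers with b < 1 and a(b+1)/(4b) ≥ 1 (with b > 0) such that 1 - a + b > 0. Then min_{|z| ≤ 1} |1 + a z + b z²| = 1 - a + b. -/
/-! Since `2b ≤ a` and `p(-1) = 1 - a + b > 0`, the polynomial `p z = 1 + a z + b z²` has no zero in
the closed unit disc, so the maximum modulus principle applied to `1 / p` shows that `‖p‖` attains
its minimum over the disc on the unit circle. For `‖z‖ = 1` we have `‖p z‖ = ‖conj z + a + b z‖`,
whose square is a quadratic in `re z` with leading coefficient `4b` and vertex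
`-a(1+b)/(4b) ≤ -1`; hence it is minimal at `z = -1`. -/

open Metric ComplexConjugate

theorem Complex.le_norm_of_forall_mem_frontier_le_norm {E : Type*} [NormedAddCommGroup E]
    [NormedSpace ℂ E] [Nontrivial E] {f : E → ℂ} {U : Set E} (hU : Bornology.IsBounded U)
    (hd : DiffContOnCl ℂ f U) (hf : ∀ z ∈ closure U, f z ≠ 0) {m : ℝ}
    (hm : ∀ z ∈ frontier U, m ≤ ‖f z‖) {z : E} (hz : z ∈ closure U) : m ≤ ‖f z‖ := by
  rcases le_or_gt m 0 with hm0 | hm0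
  · exact hm0.trans (norm_nonneg _)
  have hinv : ‖(f z)⁻¹‖ ≤ m⁻¹ :=
    Complex.norm_le_of_forall_mem_frontier_norm_le hU (hd.inv hf)
      (fun w hw => by simpa only [Pi.inv_apply, norm_inv] using inv_anti₀ hm0 (hm w hw)) hz
  rwa [norm_inv, inv_le_inv₀ (norm_pos_iff.2 (hf z hz)) hm0] at hinv

section Quadratic

variable {a b : ℝ} {z : ℂ}

theorem one_add_mul_add_mul_sq_eq_mul_conj (hz : ‖z‖ = 1) :
    1 + (a : ℂ) * z + (b : ℂ) * z ^ 2 = z * (conj z + a + b * z) := by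
  have : z * conj z = 1 := by
    rw [Complex.mul_conj, Complex.normSq_eq_norm_sq, hz]; norm_num
  linear_combination -this

theorem abs_one_sub_add_le_norm_of_norm_eq_one (hb : 0 ≤ b) (hcrit : 4 * b ≤ a * (1 + b))
    (hz : ‖z‖ = 1) : |1 - a + b| ≤ ‖1 + (a : ℂ) * z + (b : ℂ) * z ^ 2‖ := by
  have hxy : z.re * z.re + z.im * z.im = 1 := by
    rw [← Complex.normSq_apply, Complex.normSq_eq_norm_sq, hz, one_pow]
  have hx : -1 ≤ z.re := by nlinarith [sq_nonneg z.im, sq_nonneg (z.re + 1)]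
  rw [one_add_mul_add_mul_sq_eq_mul_conj hz, norm_mul, hz, one_mul, ← abs_norm, ← sq_le_sq,
    Complex.sq_norm, Complex.normSq_apply]
  simp only [Complex.add_re, Complex.add_im, Complex.conj_re, Complex.conj_im, Complex.mul_re,
    Complex.mul_im, Complex.ofReal_re, Complex.ofReal_im, zero_mul, sub_zero, add_zero]
  have hdiff : (z.re + a + b * z.re) * (z.re + a + b * z.re)
      + (-z.im + b * z.im) * (-z.im + b * z.im) - (1 - a + b) ^ 2
      = (z.re + 1) * (2 * a * (1 + b) + 4 * b * (z.re - 1)) := by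
    linear_combination (1 - b) ^ 2 * hxy
  nlinarith [mul_nonneg (neg_le_iff_add_nonneg.1 hx)
    (by nlinarith : 0 ≤ 2 * a * (1 + b) + 4 * b * (z.re - 1))]

theorem one_add_mul_add_mul_sq_ne_zero (hb : 0 ≤ b) (hab : 2 * b ≤ a) (hpos : 0 < 1 - a + b)
    (hz : ‖z‖ ≤ 1) : 1 + (a : ℂ) * z + (b : ℂ) * z ^ 2 ≠ 0 := by
  intro h
  have hxy : z.re * z.re + z.im * z.im ≤ 1 := by
    rw [← Complex.normSq_apply, Complex.normSq_eq_norm_sq]; nlinarith [norm_nonneg z]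
  have hre := congrArg Complex.re h
  have him := congrArg Complex.im h
  simp only [Complex.add_re, Complex.add_im, Complex.mul_re, Complex.mul_im, Complex.ofReal_re,
    Complex.ofReal_im, Complex.one_re, Complex.one_im, pow_two, Complex.zero_re, Complex.zero_im,
    zero_mul, sub_zero, add_zero, zero_add] at hre him
  -- a zero is either real, or satisfies `a = -2 b re z`, which turns the real part into `1 - b‖z‖²`
  rcases mul_eq_zero.1 (by linarith : z.im * (a + 2 * b * z.re) = 0) with hy | hvertex
  · have hx : -1 ≤ z.re := by nlinarith [sq_nonneg (z.re + 1)]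
    rw [hy] at hre
    nlinarith [mul_nonneg (neg_le_iff_add_nonneg.1 hx) (by nlinarith : 0 ≤ a + b * (z.re - 1))]
  · rw [show a = -2 * b * z.re by linarith] at hre
    nlinarith [mul_nonneg hb (sub_nonneg.2 hxy)]

end Quadratic

theorem stmt_10_general (a b : ℝ) (hb0 : 0 < b) (hb1 : b < 1)
    (hcrit : 1 ≤ a * (b + 1) / (4 * b)) (hpos : 0 < 1 - a + b) :
    IsLeast ((fun z : ℂ => ‖1 + (a : ℂ) * z + (b : ℂ) * z ^ 2‖) '' {z : ℂ | ‖z‖ ≤ 1})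
      (1 - a + b) := by
  have hcrit' : 4 * b ≤ a * (1 + b) := by
    rw [one_le_div (by positivity)] at hcrit; linarith
  have hab : 2 * b ≤ a := by nlinarith
  have hclosure : closure (ball (0 : ℂ) 1) = {z : ℂ | ‖z‖ ≤ 1} := by
    ext; rw [closure_ball 0 one_ne_zero, mem_closedBall_zero_iff]; rfl
  refine ⟨⟨-1, by simp, ?_⟩, ?_⟩
  · show ‖(1 : ℂ) + a * -1 + b * (-1) ^ 2‖ = 1 - a + b
    rw [show (1 : ℂ) + a * -1 + b * (-1) ^ 2 = ((1 - a + b : ℝ) : ℂ) by push_cast; ring,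
      Complex.norm_real, Real.norm_of_nonneg hpos.le]
  rintro _ ⟨z, hz, rfl⟩
  rw [← hclosure] at hz
  refine Complex.le_norm_of_forall_mem_frontier_le_norm
    (f := fun w : ℂ => 1 + (a : ℂ) * w + (b : ℂ) * w ^ 2) isBounded_ball
    (Differentiable.diffContOnCl (by fun_prop)) (fun w hw => ?_) (fun w hw => ?_) hz
  · rw [hclosure] at hw
    exact one_add_mul_add_mul_sq_ne_zero hb0.le hab hpos hw
  · rw [frontier_ball 0 one_ne_zero, mem_sphere_zero_iff_norm] at hw
    exact (le_abs_self _).trans (abs_one_sub_add_le_norm_of_norm_eq_one hb0.le hcrit' hw)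

theorem stmt_10 (a b : ℝ) (ha : 0 ≤ a) (hb0 : 0 < b) (hb1 : b < 1)
    (hcrit : 1 ≤ a * (b + 1) / (4 * b)) (hpos : 0 < 1 - a + b) :
    IsLeast ((fun z : ℂ => ‖1 + (a : ℂ) * z + (b : ℂ) * z ^ 2‖) '' {z : ℂ | ‖z‖ ≤ 1})
      (1 - a + b) :=
  stmt_10_general a b hb0 hb1 hcrit hpos
end
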